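/- Let D ≥ 2, n = 2D or n = 2D+1, ζ = exp(2πi/n), and let E_0,…,E_D be the primitive idempotent matrices of the cycle on ZMod n. Define Q_{h,i,j}(u,v,w) = n · Σ_{x ∈ ZMod n} (E_h)_{u x} (E_i)_{v x} (E_j)_{w x}, and let Fix(Aut) be the space of Aut(Γ)-invariant functions on (ZMod n)³. Define the operators E_0^{(1)}, E_0^{(2)}, E_0^{(3)} on functions f : (ZMod n)³ → ℂ by (E_0^{(1)} f)(u,v,w) = Σ_x (E_0)_{u x} f(x,v,w), (E_0^{(2)} f)(u,v,w) = Σ_x (E_0)_{v x} f(u,x,w), (E_0^{(3)} f)(u,v,w) = Σ_x (E_0)_{w x} f(u,v,x). Then: (i) {Q_{0,i,i} : 0 ≤ i ≤ D} is a basis of the image E_0^{(1)}(Fix(Aut)); (ii) {Q_{i,0,i} : 0 ≤ i ≤ D} is a basis of E_0^{(2)}(Fix(Aut)); (iii) {Q_{i,i,0} : 0 ≤ i ≤ D} is a basis of E_0^{(3)}(Fix(Aut)). -/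

import Mathlib

/-- Adjacency in the cycle graph on `ZMod n`. -/
def cycAdj (n : ℕ) (x y : ZMod n) : Prop := x - y = 1 ∨ y - x = 1

/-- The automorphism group of the cycle graph on `ZMod n`. -/
def cycAut (n : ℕ) : Subgroup (Equiv.Perm (ZMod n)) where
  carrier := {g | ∀ x y, cycAdj n (g x) (g y) ↔ cycAdj n x y}
  one_mem' := by intro x y; simp
  mul_mem' := by
    intro a b ha hb x y
    simp only [Equiv.Perm.mul_apply]
    exact (ha (b x) (b y)).trans (hb x y)
  inv_mem' := by
    intro a ha x y
    have h := ha (a⁻¹ x) (a⁻¹ y)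
    simpa using h.symm

/-- The subspace `Fix(Aut)` of `Aut(Γ)`-invariant complex functions on triples. -/
noncomputable def fixSubmodule (n : ℕ) : Submodule ℂ ((ZMod n × ZMod n × ZMod n) → ℂ) where
  carrier := {f | ∀ g ∈ cycAut n, ∀ x y z : ZMod n, f (g x, g y, g z) = f (x, y, z)}
  add_mem' := by intro f h hf hh g hg x y z; simp [hf g hg x y z, hh g hg x y z]
  zero_mem' := by intro g hg x y z; rfl
  smul_mem' := by intro c f hf g hg x y z; simp [hf g hg x y z]

/-- The primitive idempotent matrices `E_0, …, E_D` of the cycle on `ZMod n`. -/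
noncomputable def Emat (D n : ℕ) (ζ : ℂ) (j : ℕ) : Matrix (ZMod n) (ZMod n) ℂ :=
  Matrix.of fun x y =>
    if j = 0 then 1 / n
    else if n = 2 * D ∧ j = D then ζ ^ ((x - y).val * D) / n
    else (ζ ^ ((x - y).val * j) + ζ ^ (-(((x - y).val * j : ℕ) : ℤ))) / n

/-- The function `Q_{h,i,j}(u,v,w) = n · Σ_x (E_h)_{ux} (E_i)_{vx} (E_j)_{wx}`. -/
noncomputable def Qfun (D n : ℕ) [NeZero n] (ζ : ℂ) (h i j : ℕ) :
    ZMod n × ZMod n × ZMod n → ℂ := fun t =>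
  n * ∑ x : ZMod n, Emat D n ζ h t.1 x * Emat D n ζ i t.2.1 x * Emat D n ζ j t.2.2 x

/-- A matrix `M` acting on functions on triples in the first coordinate. -/
noncomputable def Mop1 (n : ℕ) [NeZero n] (M : Matrix (ZMod n) (ZMod n) ℂ)
    (f : ZMod n × ZMod n × ZMod n → ℂ) : ZMod n × ZMod n × ZMod n → ℂ := fun t =>
  ∑ x : ZMod n, M t.1 x * f (x, t.2.1, t.2.2)

/-- A matrix `M` acting on functions on triples in the second coordinate. -/
noncomputable def Mop2 (n : ℕ) [NeZero n] (M : Matrix (ZMod n) (ZMod n) ℂ)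
    (f : ZMod n × ZMod n × ZMod n → ℂ) : ZMod n × ZMod n × ZMod n → ℂ := fun t =>
  ∑ x : ZMod n, M t.2.1 x * f (t.1, x, t.2.2)

/-- A matrix `M` acting on functions on triples in the third coordinate. -/
noncomputable def Mop3 (n : ℕ) [NeZero n] (M : Matrix (ZMod n) (ZMod n) ℂ)
    (f : ZMod n × ZMod n × ZMod n → ℂ) : ZMod n × ZMod n × ZMod n → ℂ := fun t =>
  ∑ x : ZMod n, M t.2.2 x * f (t.1, t.2.1, x)

/-
Let ψ be the additive character d ↦ ζ ^ d.val of ZMod n. The entry of E_j at (x, y) is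
(1/n) Σ_{a ∈ {j, -j}} ψ (a (x - y)), and by orthogonality of characters these kernels convolve
like the indicator functions of their sets of frequencies. Hence E_i² = E_i, which turns
Q_{0,i,i}(u, v, w) into (E_i)_{v w}, and since the sets {j, -j}, 0 ≤ j ≤ D, are disjoint, the
kernels of E_0, …, E_D are linearly independent.

Every automorphism of the cycle is x ↦ c ± x, so averaging an invariant function over its first
coordinate leaves an even function of v - w, and every such function is invariant and fixed by the
averaging. An even function on ZMod n is determined by its values at 0, …, D, so these functions
form a space of dimension D + 1, spanned by the D + 1 independent kernels. Parts (ii) and (iii) are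
part (i) read after permuting the coordinates.
-/

open Finset Function

theorem linearIndependent_and_span_comp {ι T T' : Type*} {σ : T' → T} (hσ : Surjective σ)
    {Q : ι → T → ℂ} {A : Set (T → ℂ)}
    (h : LinearIndependent ℂ Q ∧ (Submodule.span ℂ (Set.range Q) : Set (T → ℂ)) = A) :
    LinearIndependent ℂ (fun i => Q i ∘ σ)
      ∧ (Submodule.span ℂ (Set.range fun i => Q i ∘ σ) : Set (T' → ℂ)) = (· ∘ σ) '' A := by
  let π := LinearMap.funLeft ℂ ℂ σ
  have hπ : LinearMap.ker π = ⊥ :=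
    LinearMap.ker_eq_bot.2 (LinearMap.funLeft_injective_of_surjective _ _ _ hσ)
  refine ⟨h.1.map' π hπ, ?_⟩
  rw [← h.2, show (· ∘ σ) = ⇑π from rfl, ← Submodule.map_coe, Submodule.map_span,
    ← Set.range_comp]
  rfl

section CharKernel

variable {R : Type*} [CommRing R] [Fintype R]

noncomputable def charKernel (ψ : AddChar R ℂ) (S : Finset R) (d : R) : ℂ :=
  (∑ a ∈ S, ψ (a * d)) / Fintype.card R

variable {ψ : AddChar R ℂ}

theorem charKernel_zero (S : Finset R) : charKernel ψ S 0 = #S / Fintype.card R := by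
  simp [charKernel]

variable [DecidableEq R] in
theorem sum_charKernel_mul_charKernel (hψ : ψ.IsPrimitive) (S T : Finset R) (u w : R) :
    ∑ x, charKernel ψ S (u - x) * charKernel ψ T (x - w) = charKernel ψ (S ∩ T) (u - w) := by
  have hR : (Fintype.card R : ℂ) ≠ 0 := Nat.cast_ne_zero.2 Fintype.card_ne_zero
  have orth (a b : R) : ∑ x, ψ (a * (u - x)) * ψ (b * (x - w))
      = if a = b then Fintype.card R * ψ (a * (u - w)) else 0 := by
    have h (x : R) : ψ (a * (u - x)) * ψ (b * (x - w)) = ψ (a * u - b * w) * ψ (x * (b - a)) := by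
      rw [← AddChar.map_add_eq_mul, ← AddChar.map_add_eq_mul]; ring_nf
    simp_rw [h, ← Finset.mul_sum, AddChar.sum_mulShift _ hψ, sub_eq_zero, eq_comm (a := b)]
    split_ifs with hab
    · rw [hab, ← mul_sub]; ring
    · simp
  simp only [charKernel, div_mul_div_comm, ← Finset.sum_div, Finset.sum_mul_sum]
  rw [Finset.sum_comm, Finset.sum_congr rfl fun a _ => Finset.sum_comm]
  simp_rw [orth, Finset.sum_ite_eq, ← Finset.sum_filter, Finset.filter_mem_eq_inter]
  rw [← Finset.mul_sum, mul_div_mul_left _ _ hR]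

theorem charKernel_even {S : Finset R} (hS : ∀ a ∈ S, -a ∈ S) : (charKernel ψ S).Even := by
  intro d
  simp only [charKernel]
  congr 1
  exact Finset.sum_nbij' (fun a => -a) (fun a => -a) hS hS (by simp) (by simp) (by simp)

variable {ι : Type*} in
theorem linearIndependent_charKernel (hψ : ψ.IsPrimitive) [Fintype ι] {S : ι → Finset R}
    (hdisj : Pairwise (Disjoint on S)) (hne : ∀ i, (S i).Nonempty) :
    LinearIndependent ℂ fun i => charKernel ψ (S i) := by
  classical
  rw [Fintype.linearIndependent_iff]
  intro c hc k
  -- convolving with the kernel of `S k` and evaluating at `0` isolates the coefficient `c k`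
  have hpair (i : ι) : ∑ x, charKernel ψ (S i) (0 - x) * charKernel ψ (S k) (x - 0)
      = if i = k then charKernel ψ (S k) 0 else 0 := by
    rw [sum_charKernel_mul_charKernel hψ, sub_zero]
    split_ifs with h
    · rw [h, Finset.inter_self]
    · rw [Finset.disjoint_iff_inter_eq_empty.1 (hdisj h)]; simp [charKernel]
  have key := congrArg (fun φ => ∑ x, φ (0 - x) * charKernel ψ (S k) (x - 0)) hc
  simp only [Finset.sum_apply, Pi.smul_apply, smul_eq_mul, Finset.sum_mul, Pi.zero_apply,
    zero_mul, Finset.sum_const_zero] at key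
  rw [Finset.sum_comm] at key
  simp_rw [mul_assoc, ← Finset.mul_sum, hpair, mul_ite, mul_zero, Finset.sum_ite_eq',
    Finset.mem_univ, if_true, charKernel_zero] at key
  have hS : (#(S k) : ℂ) / Fintype.card R ≠ 0 :=
    div_ne_zero (Nat.cast_ne_zero.2 (hne k).card_ne_zero) (Nat.cast_ne_zero.2 Fintype.card_ne_zero)
  exact (mul_eq_zero.1 key).resolve_right hS

end CharKernel

def evenSubmodule (R : Type*) [Neg R] : Submodule ℂ (R → ℂ) where
  carrier := {φ | φ.Even}
  add_mem' hf hg := hf.add hg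
  zero_mem' := Function.Even.zero
  smul_mem' c _ hf d := congrArg (c * ·) (hf d)

def negOrbit (n j : ℕ) : Finset (ZMod n) := {(j : ZMod n), -(j : ZMod n)}

section NegOrbit
variable {n : ℕ}

theorem natCast_add_natCast_ne_zero {i k : ℕ} (hpos : 0 < i + k) (hlt : i + k < n) :
    (i : ZMod n) + k ≠ 0 := by
  rw [← Nat.cast_add, Ne, ZMod.natCast_eq_zero_iff]
  exact Nat.not_dvd_of_pos_of_lt hpos hlt

theorem neg_mem_negOrbit {j : ℕ} {a : ZMod n} (ha : a ∈ negOrbit n j) : -a ∈ negOrbit n j := by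
  simp only [negOrbit, Finset.mem_insert, Finset.mem_singleton] at ha ⊢
  rcases ha with rfl | rfl <;> simp

theorem disjoint_negOrbit {D i k : ℕ} (hDn : 2 * D ≤ n) (hi : i ≤ D) (hk : k ≤ D) (hik : i ≠ k) :
    Disjoint (negOrbit n i) (negOrbit n k) := by
  have hcast : (i : ZMod n) ≠ k := by
    rw [Ne, ZMod.natCast_eq_natCast_iff', Nat.mod_eq_of_lt (by omega), Nat.mod_eq_of_lt (by omega)]
    exact hik
  have hsum : (i : ZMod n) + k ≠ 0 := natCast_add_natCast_ne_zero (by omega) (by omega)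
  rw [Finset.disjoint_left]
  intro a hai hak
  simp only [negOrbit, Finset.mem_insert, Finset.mem_singleton] at hai hak
  rcases hai with rfl | rfl <;> rcases hak with h | h
  exacts [hcast h, hsum (by linear_combination h), hsum (by linear_combination -h),
    hcast (by linear_combination -h)]

theorem exists_mem_negOrbit {D : ℕ} [NeZero n] (hnD : n ≤ 2 * D + 1) (d : ZMod n) :
    ∃ k ≤ D, d ∈ negOrbit n k := by
  simp only [negOrbit, Finset.mem_insert, Finset.mem_singleton]
  by_cases h : d.val ≤ D
  · exact ⟨d.val, h, Or.inl (ZMod.natCast_zmod_val d).symm⟩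
  · refine ⟨n - d.val, by omega, Or.inr ?_⟩
    rw [Nat.cast_sub d.val_lt.le, ZMod.natCast_self, ZMod.natCast_zmod_val, zero_sub, neg_neg]

end NegOrbit

section Spectral
variable {D n : ℕ} [NeZero n]

theorem Emat_apply_eq_charKernel {ζ : ℂ} (hζ : ζ ^ n = 1) (hDn : 2 * D ≤ n) {j : ℕ} (hj : j ≤ D)
    (x y : ZMod n) :
    Emat D n ζ j x y = charKernel (AddChar.zmodChar n hζ) (negOrbit n j) (x - y) := by
  have hpow (d : ZMod n) (k : ℕ) : ζ ^ (d.val * k) = AddChar.zmodChar n hζ (k * d) := by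
    rw [← AddChar.zmodChar_apply' hζ, Nat.cast_mul, ZMod.natCast_zmod_val, mul_comm]
  simp only [Emat, Matrix.of_apply, charKernel, negOrbit, ZMod.card]
  split_ifs with h0 hD
  · simp [h0]
  · have hneg : -(D : ZMod n) = D := by
      rw [neg_eq_iff_add_eq_zero, ← Nat.cast_add, ← two_mul, ← hD.1, ZMod.natCast_self]
    rw [hD.2, hneg, Finset.pair_eq_singleton, Finset.sum_singleton, hpow]
  · have hne : (j : ZMod n) ≠ -j := fun h =>
      natCast_add_natCast_ne_zero (n := n) (i := j) (k := j) (by omega) (by omega)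
        (by linear_combination h)
    rw [Finset.sum_pair hne, zpow_neg, zpow_natCast, hpow, ← AddChar.map_neg_eq_inv, neg_mul]

theorem finrank_evenSubmodule_le (hnD : n ≤ 2 * D + 1) :
    Module.finrank ℂ (evenSubmodule (ZMod n)) ≤ D + 1 := by
  let restrict : evenSubmodule (ZMod n) →ₗ[ℂ] Fin (D + 1) → ℂ :=
    (LinearMap.funLeft ℂ ℂ fun k : Fin (D + 1) => (k : ZMod n)) ∘ₗ (evenSubmodule (ZMod n)).subtype
  have hinj : Injective restrict := by
    rw [← LinearMap.ker_eq_bot, LinearMap.ker_eq_bot']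
    intro φ hφ
    ext d
    obtain ⟨k, hk, hd⟩ := exists_mem_negOrbit hnD d
    have hφk : (φ : ZMod n → ℂ) k = 0 := congrFun hφ ⟨k, by omega⟩
    simp only [negOrbit, Finset.mem_insert, Finset.mem_singleton] at hd
    rcases hd with rfl | rfl
    · exact hφk
    · exact (φ.2 _).trans hφk
  simpa using LinearMap.finrank_le_finrank_of_injective hinj

variable {ψ : AddChar (ZMod n) ℂ}

theorem linearIndependent_charKernel_negOrbit (hψ : ψ.IsPrimitive) (hDn : 2 * D ≤ n) :
    LinearIndependent ℂ fun i : Fin (D + 1) => charKernel ψ (negOrbit n i) :=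
  linearIndependent_charKernel hψ
    (fun i k hik => disjoint_negOrbit hDn (Nat.lt_succ_iff.1 i.2) (Nat.lt_succ_iff.1 k.2)
      (Fin.val_ne_of_ne hik))
    (fun _ => Finset.insert_nonempty _ _)

theorem span_charKernel_negOrbit (hψ : ψ.IsPrimitive) (hn : n = 2 * D ∨ n = 2 * D + 1) :
    Submodule.span ℂ (Set.range fun i : Fin (D + 1) => charKernel ψ (negOrbit n i))
      = evenSubmodule (ZMod n) := by
  have hli := linearIndependent_charKernel_negOrbit hψ (D := D) (by omega)
  refine Submodule.eq_of_le_of_finrank_le ?_ ?_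
  · rw [Submodule.span_le, Set.range_subset_iff]
    exact fun i => charKernel_even fun a => neg_mem_negOrbit
  · rw [finrank_span_eq_card hli, Fintype.card_fin]
    exact finrank_evenSubmodule_le (by omega)

end Spectral

section Automorphisms
variable {n : ℕ}

theorem addRight_mem_cycAut (c : ZMod n) : Equiv.addRight c ∈ cycAut n := by
  intro x y
  simp only [cycAdj, Equiv.coe_addRight, add_sub_add_right_eq_sub]

theorem neg_mem_cycAut : Equiv.neg (ZMod n) ∈ cycAut n := by
  intro x y
  simp only [cycAdj, Equiv.neg_apply, neg_sub_neg]
  exact or_comm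

theorem exists_eq_add_mul_of_mem_cycAut (hn : 3 ≤ n) {g : Equiv.Perm (ZMod n)} (hg : g ∈ cycAut n) :
    ∃ ε : ZMod n, (ε = 1 ∨ ε = -1) ∧ ∀ x, g x = g 0 + ε * x := by
  have : NeZero n := ⟨by omega⟩
  have htwo : (1 : ZMod n) + 1 ≠ 0 := by
    exact_mod_cast natCast_add_natCast_ne_zero (n := n) (i := 1) (k := 1) (by omega) (by omega)
  have hstep (x : ZMod n) : g (x + 1) - g x = 1 ∨ g (x + 1) - g x = -1 := by
    rcases (hg (x + 1) x).2 (Or.inl (by ring)) with h | h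
    exacts [Or.inl h, Or.inr (by linear_combination -h)]
  have hback (x : ZMod n) : g (x + 1 + 1) ≠ g x := fun h =>
    htwo (by linear_combination g.injective h)
  have hconst (x : ZMod n) : g (x + 1 + 1) - g (x + 1) = g (x + 1) - g x := by
    rcases hstep x with h1 | h1 <;> rcases hstep (x + 1) with h2 | h2 <;>
      first
      | exact absurd (by linear_combination h1 + h2) (hback x)
      | rw [h1, h2]
  have hdiff (k : ℕ) : g (k + 1) - g k = g 1 - g 0 := by
    induction k with
    | zero => simp
    | succ k ih => push_cast; rw [hconst, ih]
  have hnat (k : ℕ) : g k = g 0 + (g 1 - g 0) * k := by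
    induction k with
    | zero => simp
    | succ k ih => push_cast; linear_combination hdiff k + ih
  refine ⟨g 1 - g 0, by simpa using hstep 0, fun x => ?_⟩
  simpa using hnat x.val

end Automorphisms

def diff₂₃ (n : ℕ) (t : ZMod n × ZMod n × ZMod n) : ZMod n := t.2.1 - t.2.2

section FirstCoordinate
variable {D n : ℕ} {ζ : ℂ}

theorem diff₂₃_surjective : Surjective (diff₂₃ n) :=
  fun d => ⟨(0, d, 0), sub_zero d⟩

theorem comp_diff₂₃_mem_fixSubmodule (hn : 3 ≤ n) {φ : ZMod n → ℂ} (hφ : φ.Even) :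
    φ ∘ diff₂₃ n ∈ fixSubmodule n := by
  intro g hg x y z
  obtain ⟨ε, hε, hg⟩ := exists_eq_add_mul_of_mem_cycAut hn hg
  change φ (g y - g z) = φ (y - z)
  rw [hg y, hg z]
  rcases hε with rfl | rfl
  · congr 1; ring
  · rw [← hφ]; congr 1; ring

theorem Emat_zero_apply (x y : ZMod n) : Emat D n ζ 0 x y = 1 / n := by
  simp [Emat]

variable [NeZero n]

theorem Mop1_Emat_zero_comp_diff₂₃ (φ : ZMod n → ℂ) :
    Mop1 n (Emat D n ζ 0) (φ ∘ diff₂₃ n) = φ ∘ diff₂₃ n := by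
  ext t
  simp [Mop1, Emat_zero_apply, diff₂₃, NeZero.ne]

theorem exists_Mop1_Emat_zero_eq_comp_diff₂₃ {f : ZMod n × ZMod n × ZMod n → ℂ}
    (hf : f ∈ fixSubmodule n) :
    ∃ φ ∈ evenSubmodule (ZMod n), Mop1 n (Emat D n ζ 0) f = φ ∘ diff₂₃ n := by
  refine ⟨fun d => (∑ x, f (x, d, 0)) / n, fun d => ?_, ?_⟩
  · have h (x : ZMod n) : f (x, -d, 0) = f (-x, d, 0) := by
      simpa using hf _ neg_mem_cycAut (-x) d 0
    simp only [h]
    congr 1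
    exact Equiv.sum_comp (Equiv.neg (ZMod n)) fun x => f (x, d, 0)
  · ext ⟨u, v, w⟩
    have h (x : ZMod n) : f (x, v, w) = f (x - w, v - w, 0) := by
      simpa [sub_eq_add_neg] using (hf _ (addRight_mem_cycAut (-w)) x v w).symm
    have hsum : ∑ x, f (x - w, v - w, 0) = ∑ x, f (x, v - w, 0) :=
      Equiv.sum_comp (Equiv.subRight w) fun x => f (x, v - w, 0)
    simp only [Mop1, Emat_zero_apply, h, comp_apply, diff₂₃, ← Finset.mul_sum, hsum]
    ring

theorem image_Mop1_fixSubmodule (hn : 3 ≤ n) :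
    {g | ∃ f ∈ fixSubmodule n, g = Mop1 n (Emat D n ζ 0) f}
      = (· ∘ diff₂₃ n) '' evenSubmodule (ZMod n) := by
  ext g
  constructor
  · rintro ⟨f, hf, rfl⟩
    obtain ⟨φ, hφ, h⟩ := exists_Mop1_Emat_zero_eq_comp_diff₂₃ hf
    exact ⟨φ, hφ, h.symm⟩
  · rintro ⟨φ, hφ, rfl⟩
    exact ⟨_, comp_diff₂₃_mem_fixSubmodule hn hφ, (Mop1_Emat_zero_comp_diff₂₃ φ).symm⟩

theorem Qfun_zero_self_eq_comp_diff₂₃ (hζ : IsPrimitiveRoot ζ n) (hDn : 2 * D ≤ n) {i : ℕ}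
    (hi : i ≤ D) :
    Qfun D n ζ 0 i i = charKernel (AddChar.zmodChar n hζ.pow_eq_one) (negOrbit n i) ∘ diff₂₃ n := by
  have hψ := AddChar.zmodChar_primitive_of_primitive_root n hζ
  ext ⟨u, v, w⟩
  have hsymm (x : ZMod n) : charKernel (AddChar.zmodChar n hζ.pow_eq_one) (negOrbit n i) (w - x)
      = charKernel (AddChar.zmodChar n hζ.pow_eq_one) (negOrbit n i) (x - w) := by
    rw [← neg_sub, charKernel_even fun _ => neg_mem_negOrbit]
  simp only [Qfun, Emat_zero_apply, Emat_apply_eq_charKernel hζ.pow_eq_one hDn hi, hsymm,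
    mul_assoc, ← Finset.mul_sum, sum_charKernel_mul_charKernel hψ, Finset.inter_self,
    comp_apply, diff₂₃]
  field_simp [NeZero.ne n]

theorem Qfun_zero_self_basis (hζ : IsPrimitiveRoot ζ n) (hD : 2 ≤ D)
    (hn : n = 2 * D ∨ n = 2 * D + 1) :
    LinearIndependent ℂ (fun i : Fin (D + 1) => Qfun D n ζ 0 i.1 i.1)
      ∧ (↑(Submodule.span ℂ (Set.range fun i : Fin (D + 1) => Qfun D n ζ 0 i.1 i.1))
          : Set (ZMod n × ZMod n × ZMod n → ℂ))
        = {g | ∃ f ∈ fixSubmodule n, g = Mop1 n (Emat D n ζ 0) f} := by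
  have hψ := AddChar.zmodChar_primitive_of_primitive_root n hζ
  simp only [Qfun_zero_self_eq_comp_diff₂₃ hζ (by omega : 2 * D ≤ n)
    (Nat.lt_succ_iff.1 (Fin.is_lt _))]
  rw [image_Mop1_fixSubmodule (by omega)]
  refine linearIndependent_and_span_comp diff₂₃_surjective
    ⟨linearIndependent_charKernel_negOrbit hψ (by omega), ?_⟩
  rw [span_charKernel_negOrbit hψ hn]

end FirstCoordinate

def swap₁₂ (α : Type*) : α × α × α ≃ α × α × α where
  toFun t := (t.2.1, t.1, t.2.2)
  invFun t := (t.2.1, t.1, t.2.2)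

def rotate₃ (α : Type*) : α × α × α ≃ α × α × α where
  toFun t := (t.2.2, t.1, t.2.1)
  invFun t := (t.2.1, t.2.2, t.1)

section Permute
variable {D n : ℕ} {ζ : ℂ}

theorem Mop1_comp_swap₁₂ [NeZero n] (M : Matrix (ZMod n) (ZMod n) ℂ)
    (f : ZMod n × ZMod n × ZMod n → ℂ) : Mop1 n M f ∘ swap₁₂ _ = Mop2 n M (f ∘ swap₁₂ _) :=
  rfl

theorem Mop1_comp_rotate₃ [NeZero n] (M : Matrix (ZMod n) (ZMod n) ℂ)
    (f : ZMod n × ZMod n × ZMod n → ℂ) : Mop1 n M f ∘ rotate₃ _ = Mop3 n M (f ∘ rotate₃ _) :=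
  rfl

theorem Qfun_comp_swap₁₂ [NeZero n] (h i j : ℕ) :
    Qfun D n ζ h i j ∘ swap₁₂ _ = Qfun D n ζ i h j := by
  ext t
  simp only [Qfun, swap₁₂, comp_apply, Equiv.coe_fn_mk]
  simp_rw [mul_comm (Emat D n ζ h _ _)]

theorem Qfun_comp_rotate₃ [NeZero n] (h i j : ℕ) :
    Qfun D n ζ h i j ∘ rotate₃ _ = Qfun D n ζ i j h := by
  ext t
  simp only [Qfun, rotate₃, comp_apply, Equiv.coe_fn_mk]
  congr 1
  exact Finset.sum_congr rfl fun _ _ => by ring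

theorem image_comp_fixSubmodule (σ : ZMod n × ZMod n × ZMod n ≃ ZMod n × ZMod n × ZMod n)
    (hσ : ∀ f ∈ fixSubmodule n, f ∘ σ ∈ fixSubmodule n)
    (hσ' : ∀ f ∈ fixSubmodule n, f ∘ σ.symm ∈ fixSubmodule n)
    {op op' : (ZMod n × ZMod n × ZMod n → ℂ) → ZMod n × ZMod n × ZMod n → ℂ}
    (hop : ∀ f, op f ∘ σ = op' (f ∘ σ)) :
    {g | ∃ f ∈ fixSubmodule n, g = op' f} = (· ∘ σ) '' {g | ∃ f ∈ fixSubmodule n, g = op f} := by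
  ext g
  constructor
  · rintro ⟨f, hf, rfl⟩
    refine ⟨op (f ∘ σ.symm), ⟨_, hσ' f hf, rfl⟩, ?_⟩
    simp [hop, comp_assoc]
  · rintro ⟨_, ⟨f, hf, rfl⟩, rfl⟩
    exact ⟨f ∘ σ, hσ f hf, hop f⟩

end Permute

/-- `{Q_{0,i,i}}`, `{Q_{i,0,i}}`, `{Q_{i,i,0}}` (`0 ≤ i ≤ D`) are bases
of the images of `Fix(Aut)` under the operators `E_0^{(1)}`, `E_0^{(2)}`, `E_0^{(3)}`
respectively. -/
theorem stmt_18 (D n : ℕ) (hD : 2 ≤ D) (hn : n = 2 * D ∨ n = 2 * D + 1) [NeZero n]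
    (ζ : ℂ) (hζ : ζ = Complex.exp (2 * Real.pi * Complex.I / n)) :
    (LinearIndependent ℂ (fun i : Fin (D + 1) => Qfun D n ζ 0 i.1 i.1)
      ∧ (↑(Submodule.span ℂ (Set.range fun i : Fin (D + 1) => Qfun D n ζ 0 i.1 i.1))
          : Set (ZMod n × ZMod n × ZMod n → ℂ))
        = {g | ∃ f ∈ fixSubmodule n, g = Mop1 n (Emat D n ζ 0) f})
    ∧ (LinearIndependent ℂ (fun i : Fin (D + 1) => Qfun D n ζ i.1 0 i.1)
      ∧ (↑(Submodule.span ℂ (Set.range fun i : Fin (D + 1) => Qfun D n ζ i.1 0 i.1))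
          : Set (ZMod n × ZMod n × ZMod n → ℂ))
        = {g | ∃ f ∈ fixSubmodule n, g = Mop2 n (Emat D n ζ 0) f})
    ∧ (LinearIndependent ℂ (fun i : Fin (D + 1) => Qfun D n ζ i.1 i.1 0)
      ∧ (↑(Submodule.span ℂ (Set.range fun i : Fin (D + 1) => Qfun D n ζ i.1 i.1 0))
          : Set (ZMod n × ZMod n × ZMod n → ℂ))
        = {g | ∃ f ∈ fixSubmodule n, g = Mop3 n (Emat D n ζ 0) f}) := by
  have h₁ := Qfun_zero_self_basis (hζ ▸ Complex.isPrimitiveRoot_exp n (NeZero.ne n)) hD hn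
  have h₂ := linearIndependent_and_span_comp (swap₁₂ _).surjective h₁
  have h₃ := linearIndependent_and_span_comp (rotate₃ _).surjective h₁
  simp only [Qfun_comp_swap₁₂, Qfun_comp_rotate₃] at h₂ h₃
  refine ⟨h₁, ?_, ?_⟩
  · rwa [image_comp_fixSubmodule (swap₁₂ _) (fun f hf g hg x y z => hf g hg y x z)
      (fun f hf g hg x y z => hf g hg y x z) (Mop1_comp_swap₁₂ _)]
  · rwa [image_comp_fixSubmodule (rotate₃ _) (fun f hf g hg x y z => hf g hg z x y)
      (fun f hf g hg x y z => hf g hg y z x) (Mop1_comp_rotate₃ _)]
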